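/- Range preservation for the implicit scheme (scalar core step): let c > 0, κ ≥ 0, κ₀ ≥ 0, Δt > 0, and suppose the sequence H : {-1,…,K+1} → ℝ satisfies, for all 0 ≤ k ≤ K, (H_k − h_k)/Δt = κ₀² δ⟨2⟩H_k − c(H_k − 1) − κ H_k g_k, where g_k ≥ 0, h : {0,…,K} → ℝ satisfies 0 ≤ h_k ≤ 1, and H satisfies the discrete Neumann conditions H_{-1} = H_1, H_{K+1} = H_{K-1}. Then 0 ≤ H_k ≤ 1 for all 0 ≤ k ≤ K. -/
import Mathlib


theorem stmt_19 (K : ℕ) (hK : 1 ≤ K) (Δx : ℝ) (hΔx : Δx = 1 / K)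
    (Δt c κ κ₀ : ℝ) (hΔt : 0 < Δt) (hc : 0 < c) (hκ : 0 ≤ κ) (hκ₀ : 0 ≤ κ₀)
    (H h g : ℤ → ℝ)
    (hg : ∀ k : ℤ, 0 ≤ k → k ≤ K → 0 ≤ g k)
    (hh : ∀ k : ℤ, 0 ≤ k → k ≤ K → 0 ≤ h k ∧ h k ≤ 1)
    (hbc₀ : H (-1) = H 1) (hbc₁ : H (K+1) = H (K-1))
    (hscheme : ∀ k : ℤ, 0 ≤ k → k ≤ K →
      (H k - h k) / Δt =
        κ₀^2 * ((H (k+1) - 2 * H k + H (k-1)) / Δx^2) - c * (H k - 1) - κ * H k * g k) :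
    ∀ k : ℤ, 0 ≤ k → k ≤ K → 0 ≤ H k ∧ H k ≤ 1 := by
  have hKZ : (1:ℤ) ≤ (K:ℤ) := by exact_mod_cast hK
  have hKpos : (0:ℝ) < (K:ℝ) := by
    have : (1:ℝ) ≤ (K:ℝ) := by exact_mod_cast hK
    linarith
  have hΔxpos : 0 < Δx := by rw [hΔx]; positivity
  have hΔx2 : 0 < Δx ^ 2 := by positivity
  set s : Finset ℤ := Finset.Icc 0 (K:ℤ) with hs_def
  have hs : s.Nonempty := ⟨0, by simp [hs_def]⟩
  have mem_s : ∀ k : ℤ, k ∈ s ↔ (0 ≤ k ∧ k ≤ (K:ℤ)) := by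
    intro k; simp [hs_def]
  -- Upper bound
  have upper : ∀ k : ℤ, 0 ≤ k → k ≤ (K:ℤ) → H k ≤ 1 := by
    obtain ⟨k₀, hk₀s, hmax⟩ := s.exists_max_image H hs
    obtain ⟨hk₀0, hk₀K⟩ := (mem_s k₀).mp hk₀s
    have hnb : H (k₀ + 1) + H (k₀ - 1) ≤ 2 * H k₀ := by
      rcases eq_or_lt_of_le hk₀0 with h0 | h0
      · -- k₀ = 0
        have e1 : H (k₀ + 1) ≤ H k₀ := by
          apply hmax; rw [mem_s]; omega
        have e2 : H (k₀ - 1) ≤ H k₀ := by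
          have : k₀ - 1 = (-1 : ℤ) := by omega
          rw [this, hbc₀]
          apply hmax; rw [mem_s]; omega
        linarith
      · rcases eq_or_lt_of_le hk₀K with hK' | hK'
        · -- k₀ = K
          subst hK'
          have e1 : H ((K:ℤ) + 1) ≤ H (K:ℤ) := by
            rw [hbc₁]
            apply hmax; rw [mem_s]; omega
          have e2 : H ((K:ℤ) - 1) ≤ H (K:ℤ) := by
            apply hmax; rw [mem_s]; omega
          linarith
        · have e1 : H (k₀ + 1) ≤ H k₀ := by
            apply hmax; rw [mem_s]; omega
          have e2 : H (k₀ - 1) ≤ H k₀ := by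
            apply hmax; rw [mem_s]; omega
          linarith
    have hmax1 : H k₀ ≤ 1 := by
      by_contra hgt
      push_neg at hgt
      have hsch := hscheme k₀ hk₀0 hk₀K
      have hlap : κ₀^2 * ((H (k₀+1) - 2 * H k₀ + H (k₀-1)) / Δx^2) ≤ 0 := by
        apply mul_nonpos_of_nonneg_of_nonpos (by positivity)
        apply div_nonpos_of_nonpos_of_nonneg _ (le_of_lt hΔx2)
        linarith
      have hhk := hh k₀ hk₀0 hk₀K
      have hgk := hg k₀ hk₀0 hk₀K
      have hglb : 0 ≤ κ * H k₀ * g k₀ := by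
        apply mul_nonneg (mul_nonneg hκ (by linarith)) hgk
      have hlhs : 0 < (H k₀ - h k₀) / Δt := by
        apply div_pos (by linarith) hΔt
      nlinarith [hsch, hlap, hglb, hlhs]
    intro k hk0 hkK
    exact le_trans (hmax k ((mem_s k).mpr ⟨hk0, hkK⟩)) hmax1
  -- Lower bound
  have lower : ∀ k : ℤ, 0 ≤ k → k ≤ (K:ℤ) → 0 ≤ H k := by
    obtain ⟨k₁, hk₁s, hmin⟩ := s.exists_min_image H hs
    obtain ⟨hk₁0, hk₁K⟩ := (mem_s k₁).mp hk₁s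
    have hnb : 2 * H k₁ ≤ H (k₁ + 1) + H (k₁ - 1) := by
      rcases eq_or_lt_of_le hk₁0 with h0 | h0
      · have e1 : H k₁ ≤ H (k₁ + 1) := by
          apply hmin; rw [mem_s]; omega
        have e2 : H k₁ ≤ H (k₁ - 1) := by
          have : k₁ - 1 = (-1 : ℤ) := by omega
          rw [this, hbc₀]
          apply hmin; rw [mem_s]; omega
        linarith
      · rcases eq_or_lt_of_le hk₁K with hK' | hK'
        · subst hK'
          have e1 : H (K:ℤ) ≤ H ((K:ℤ) + 1) := by
            rw [hbc₁]
            apply hmin; rw [mem_s]; omega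
          have e2 : H (K:ℤ) ≤ H ((K:ℤ) - 1) := by
            apply hmin; rw [mem_s]; omega
          linarith
        · have e1 : H k₁ ≤ H (k₁ + 1) := by
            apply hmin; rw [mem_s]; omega
          have e2 : H k₁ ≤ H (k₁ - 1) := by
            apply hmin; rw [mem_s]; omega
          linarith
    have hmin0 : 0 ≤ H k₁ := by
      by_contra hlt
      push_neg at hlt
      have hsch := hscheme k₁ hk₁0 hk₁K
      have hlap : 0 ≤ κ₀^2 * ((H (k₁+1) - 2 * H k₁ + H (k₁-1)) / Δx^2) := by
        apply mul_nonneg (by positivity)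
        apply div_nonneg _ (le_of_lt hΔx2)
        linarith
      have hhk := hh k₁ hk₁0 hk₁K
      have hgk := hg k₁ hk₁0 hk₁K
      have hglb : κ * H k₁ * g k₁ ≤ 0 := by
        apply mul_nonpos_of_nonpos_of_nonneg _ hgk
        exact mul_nonpos_of_nonneg_of_nonpos hκ (le_of_lt hlt)
      have hlhs : (H k₁ - h k₁) / Δt < 0 := by
        apply div_neg_of_neg_of_pos (by linarith) hΔt
      nlinarith [hsch, hlap, hglb, hlhs]
    intro k hk0 hkK
    exact le_trans hmin0 (hmin k ((mem_s k).mpr ⟨hk0, hkK⟩))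
  intro k hk0 hkK
  exact ⟨lower k hk0 hkK, upper k hk0 hkK⟩
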